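/- arXiv:0907.2266 — 2 statements merged into one kernel-verified Lean document; each statement's English description precedes it below -/
import Mathlib

section
/- Let R be a 2-torsion free σ-prime ring, U a square closed σ-Lie ideal of R, and d a derivation of R which commutes with σ on U. If [d(x), d(y)] = 0 for all x, y ∈ U, then d = 0 or U ⊆ Z(R). -/
namespace Stmt14

variable {R : Type*} [Ring R]

/-- words: products of elements of U (including the empty product 1) -/
inductive IsWord (U : Set R) : R → Prop
  | one : IsWord U 1
  | cons {u t : R} (hu : u ∈ U) (ht : IsWord U t) : IsWord U (u * t)

/-- additive group closure of the set of words -/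
inductive InV (U : Set R) : R → Prop
  | word {t : R} (ht : IsWord U t) : InV U t
  | add {s t : R} (hs : InV U s) (ht : InV U t) : InV U (s + t)
  | neg {t : R} (ht : InV U t) : InV U (-t)

structure Hyp (σ d : R → R) (U : Set R) : Prop where
  σadd : ∀ x y : R, σ (x + y) = σ x + σ y
  σmul : ∀ x y : R, σ (x * y) = σ y * σ x
  σinv : ∀ x : R, σ (σ x) = x
  tor : ∀ x : R, x + x = 0 → x = 0
  sp : ∀ a b : R, (∀ r : R, a * r * b = 0) → (∀ r : R, a * r * σ b = 0) → a = 0 ∨ b = 0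
  addU : ∀ u ∈ U, ∀ v ∈ U, u + v ∈ U
  negU : ∀ u ∈ U, -u ∈ U
  lie : ∀ u ∈ U, ∀ r : R, u * r - r * u ∈ U
  sU : ∀ u ∈ U, σ u ∈ U
  sq : ∀ u ∈ U, u * u ∈ U
  dadd : ∀ x y : R, d (x + y) = d x + d y
  dmul : ∀ x y : R, d (x * y) = d x * y + x * d y
  dσU : ∀ u ∈ U, d (σ u) = σ (d u)

variable {σ d : R → R} {U : Set R}

section Basic
variable (H : Hyp σ d U)
include H

lemma σ0 : σ (0 : R) = 0 := by
  have h := H.σadd 0 0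
  rw [add_zero] at h
  have : σ (0:R) + 0 = σ 0 + σ 0 := by rw [add_zero]; exact h
  exact (add_left_cancel this).symm

lemma σneg (x : R) : σ (-x) = -σ x := by
  have h := H.σadd x (-x)
  rw [add_neg_cancel, σ0 H] at h
  exact (eq_neg_of_add_eq_zero_right h.symm)

lemma σsub (x y : R) : σ (x - y) = σ x - σ y := by
  rw [sub_eq_add_neg, H.σadd, σneg H, sub_eq_add_neg]

lemma σ1 : σ (1 : R) = 1 := by
  have h : ∀ x : R, σ x = σ 1 * σ x := by
    intro x
    have := H.σmul x 1
    rwa [mul_one] at this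
  have h2 := h (σ 1)
  rw [H.σinv] at h2
  rw [mul_one] at h2
  exact h2.symm

lemma σeq0 {x : R} (h : σ x = 0) : x = 0 := by
  have := congrArg σ h
  rwa [H.σinv, σ0 H] at this

lemma d0 : d (0 : R) = 0 := by
  have h := H.dadd 0 0
  rw [add_zero] at h
  have : d (0:R) + 0 = d 0 + d 0 := by rw [add_zero]; exact h
  exact (add_left_cancel this).symm

lemma dneg (x : R) : d (-x) = -d x := by
  have h := H.dadd x (-x)
  rw [add_neg_cancel, d0 H] at h
  exact (eq_neg_of_add_eq_zero_right h.symm)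

lemma dsub (x y : R) : d (x - y) = d x - d y := by
  rw [sub_eq_add_neg, H.dadd, dneg H, sub_eq_add_neg]

lemma subU : ∀ u ∈ U, ∀ v ∈ U, u - v ∈ U := by
  intro u hu v hv
  rw [sub_eq_add_neg]
  exact H.addU u hu _ (H.negU v hv)

/-- 2uv ∈ U for u,v ∈ U -/
lemma two_mem : ∀ y ∈ U, ∀ u ∈ U, y * u + y * u ∈ U := by
  intro y hy u hu
  have m1 : (y+u)*(y+u) ∈ U := H.sq _ (H.addU y hy u hu)
  have m2 : (y+u)*(y+u) - y*y ∈ U := subU H _ m1 _ (H.sq y hy)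
  have m3 : (y+u)*(y+u) - y*y - u*u ∈ U := subU H _ m2 _ (H.sq u hu)
  have m4 : y*u - u*y ∈ U := H.lie y hy u
  have m5 := H.addU _ m3 _ m4
  have e : ((y+u)*(y+u) - y*y - u*u) + (y*u - u*y) = y*u + y*u := by noncomm_ring
  rwa [e] at m5

/-- symmetric version of σ-primeness -/
lemma spSym (a b : R) (h1 : ∀ r : R, a * r * b = 0) (h2 : ∀ r : R, σ a * r * b = 0) :
    a = 0 ∨ b = 0 := by
  have k1 : ∀ r : R, σ b * r * a = 0 := by
    intro r
    have := congrArg σ (h2 (σ r))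
    rw [σ0 H, H.σmul, H.σmul, H.σinv, H.σinv] at this
    rw [← mul_assoc] at this
    exact this
  have k2 : ∀ r : R, σ b * r * σ a = 0 := by
    intro r
    have := congrArg σ (h1 (σ r))
    rw [σ0 H, H.σmul, H.σmul, H.σinv] at this
    rw [← mul_assoc] at this
    exact this
  rcases H.sp (σ b) a k1 k2 with h | h
  · exact Or.inr (σeq0 H h)
  · exact Or.inl h

end Basic
section LemW
variable (H : Hyp σ d U)
include H

/-- Herstein-type lemma: a σ-stable Lie "ideal" (given as a predicate) which is
commutative is central. -/
lemma lemW (P0 : R → Prop) (hlie : ∀ a, P0 a → ∀ r, P0 (a*r - r*a))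
    (hs0 : ∀ a, P0 a → P0 (σ a))
    (hcomm : ∀ a b, P0 a → P0 b → a*b = b*a) :
    ∀ a, P0 a → ∀ r, a*r = r*a := by
  have hZ : ∀ x y, P0 x → P0 y → ∀ t, x*(y*t - t*y) - (y*t - t*y)*x = 0 :=
    fun x y hx hy t => sub_eq_zero.mpr (hcomm x _ hx (hlie y hy t))
  have Mab : ∀ x y, P0 x → P0 y → ∀ r s,
      (y*r - r*y)*(x*s - s*x) + (x*r - r*x)*(y*s - s*y) = 0 := by
    intro x y hx hy r s
    have e : (y*r - r*y)*(x*s - s*x) + (x*r - r*x)*(y*s - s*y)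
        = (x*(y*(r*s) - (r*s)*y) - (y*(r*s) - (r*s)*y)*x)
          - (x*(y*r - r*y) - (y*r - r*y)*x)*s - r*(x*(y*s - s*y) - (y*s - s*y)*x) := by
      noncomm_ring
    rw [hZ x y hx hy (r*s), hZ x y hx hy r, hZ x y hx hy s] at e
    simpa using e
  have Ta : ∀ x, P0 x → ∀ r s, (x*r - r*x)*(x*s - s*x) = 0 := by
    intro x hx r s
    apply H.tor
    exact Mab x x hx hx r s
  have Ea : ∀ x, P0 x → ∀ r s t, (x*r - r*x)*s*(x*t - t*x) = 0 := by
    intro x hx r s t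
    have e : (x*r - r*x)*s*(x*t - t*x)
        = (x*r - r*x)*(x*(s*t) - (s*t)*x) - ((x*r - r*x)*(x*s - s*x))*t := by noncomm_ring
    rw [Ta x hx r (s*t), Ta x hx r s] at e
    simpa using e
  have M' : ∀ x y, P0 x → P0 y → ∀ r s t,
      (y*r - r*y)*s*(x*t - t*x) + (x*r - r*x)*s*(y*t - t*y) = 0 := by
    intro x y hx hy r s t
    have e : (y*r - r*y)*s*(x*t - t*x) + (x*r - r*x)*s*(y*t - t*y)
        = ((y*r - r*y)*(x*(s*t) - (s*t)*x) + (x*r - r*x)*(y*(s*t) - (s*t)*y))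
          - ((y*r - r*y)*(x*s - s*x) + (x*r - r*x)*(y*s - s*y))*t := by noncomm_ring
    rw [Mab x y hx hy r (s*t), Mab x y hx hy r s] at e
    simpa using e
  intro a ha r
  have hb : P0 (σ a) := hs0 a ha
  have sδ : ∀ (x t : R), σ (x*t - t*x) = σ t*σ x - σ x*σ t := by
    intro x t
    rw [σsub H, H.σmul, H.σmul]
  -- X r s t := (a*r - r*a)*s*(σ a*t - t*σ a)
  have hσX : ∀ r s t : R, σ ((a*r - r*a)*s*(σ a*t - t*σ a))
      = (a*σ t - σ t*a)*σ s*(σ a*σ r - σ r*σ a) := by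
    intro r s t
    rw [H.σmul, H.σmul, sδ, sδ, H.σinv]
    noncomm_ring
  have hXX : ∀ r s t y : R,
      ((a*r - r*a)*s*(σ a*t - t*σ a))*y*((a*r - r*a)*s*(σ a*t - t*σ a)) = 0 := by
    intro r s t y
    have m := M' a (σ a) ha hb t y r
    have e : ((a*r - r*a)*s*(σ a*t - t*σ a))*y*((a*r - r*a)*s*(σ a*t - t*σ a))
        = (a*r - r*a)*s*((σ a*t - t*σ a)*y*(a*r - r*a)
            + (a*t - t*a)*y*(σ a*r - r*σ a))*s*(σ a*t - t*σ a)
          - ((a*r - r*a)*s*(a*t - t*a))*(y*((σ a*r - r*σ a)*s*(σ a*t - t*σ a))) := by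
      noncomm_ring
    rw [m, Ea a ha r s t] at e
    simpa using e
  have hXs : ∀ r s t y : R,
      ((a*r - r*a)*s*(σ a*t - t*σ a))*y*σ ((a*r - r*a)*s*(σ a*t - t*σ a)) = 0 := by
    intro r s t y
    rw [hσX]
    have m := M' a (σ a) ha hb t y (σ t)
    have e : ((a*r - r*a)*s*(σ a*t - t*σ a))*y*((a*σ t - σ t*a)*σ s*(σ a*σ r - σ r*σ a))
        = (a*r - r*a)*s*((σ a*t - t*σ a)*y*(a*σ t - σ t*a)
            + (a*t - t*a)*y*(σ a*σ t - σ t*σ a))*σ s*(σ a*σ r - σ r*σ a)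
          - ((a*r - r*a)*s*(a*t - t*a))*(y*((σ a*σ t - σ t*σ a)*σ s*(σ a*σ r - σ r*σ a))) := by
      noncomm_ring
    rw [m, Ea a ha r s t] at e
    simpa using e
  have hX0 : ∀ r s t : R, (a*r - r*a)*s*(σ a*t - t*σ a) = 0 := by
    intro r s t
    rcases H.sp _ _ (fun y => hXX r s t y) (fun y => hXs r s t y) with h | h
    · exact h
    · exact h
  have side : ∀ s, (a*r - r*a)*s*σ (a*r - r*a) = 0 := by
    intro s
    have e : (a*r - r*a)*s*σ (a*r - r*a) = -((a*r - r*a)*s*(σ a*σ r - σ r*σ a)) := by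
      rw [sδ]; noncomm_ring
    rw [hX0 r s (σ r)] at e
    simpa using e
  have final : a*r - r*a = 0 := by
    rcases H.sp (a*r - r*a) (a*r - r*a) (fun s => Ea a ha r s r) side with h | h
    · exact h
    · exact h
  exact sub_eq_zero.mp final

end LemW
section Closure
variable (H : Hyp σ d U)

lemma word_mul {s t : R} (hs : IsWord U s) (ht : IsWord U t) : IsWord U (s*t) := by
  induction hs with
  | one => rwa [one_mul]
  | cons hu hw ih => rw [mul_assoc]; exact IsWord.cons hu ih

lemma word_single {u : R} (hu : u ∈ U) : IsWord U u := by
  have := IsWord.cons hu (IsWord.one (U := U))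
  rwa [mul_one] at this

include H in
lemma word_sigma {t : R} (ht : IsWord U t) : IsWord U (σ t) := by
  induction ht with
  | one => rw [σ1 H]; exact IsWord.one
  | cons hu hw ih =>
      rw [H.σmul]
      exact word_mul ih (word_single (H.sU _ hu))

lemma inV_U {u : R} (hu : u ∈ U) : InV U u := InV.word (word_single hu)

lemma inV_one : InV U (1 : R) := InV.word IsWord.one

lemma inV_zero : InV U (0 : R) := by
  have := InV.add (InV.word (IsWord.one (U := U))) (InV.neg (InV.word (IsWord.one (U := U))))
  rwa [add_neg_cancel] at this

lemma inV_mul {s t : R} (hs : InV U s) (ht : InV U t) : InV U (s*t) := by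
  induction hs with
  | word hw =>
      induction ht with
      | word hw2 => exact InV.word (word_mul hw hw2)
      | add h1 h2 ih1 ih2 => rw [mul_add]; exact InV.add ih1 ih2
      | neg h1 ih1 => rw [mul_neg]; exact InV.neg ih1
  | add h1 h2 ih1 ih2 => rw [add_mul]; exact InV.add ih1 ih2
  | neg h1 ih1 => rw [neg_mul]; exact InV.neg ih1

include H in
lemma inV_sigma {t : R} (ht : InV U t) : InV U (σ t) := by
  induction ht with
  | word hw => exact InV.word (word_sigma H hw)
  | add h1 h2 ih1 ih2 => rw [H.σadd]; exact InV.add ih1 ih2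
  | neg h1 ih1 => rw [σneg H]; exact InV.neg ih1

include H in
lemma inV_lie {t : R} (ht : InV U t) : ∀ r : R, InV U (t*r - r*t) := by
  induction ht with
  | word hw =>
      induction hw with
      | one =>
          intro r
          have e : (1:R)*r - r*1 = 0 := by noncomm_ring
          rw [e]; exact inV_zero
      | @cons u t hu hw2 ih =>
          intro r
          have e : (u*t)*r - r*(u*t) = u*(t*r - r*t) + (u*r - r*u)*t := by noncomm_ring
          rw [e]
          exact InV.add (inV_mul (inV_U hu) (ih r)) (inV_mul (inV_U (H.lie u hu r)) (InV.word hw2))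
  | @add s t h1 h2 ih1 ih2 =>
      intro r
      have e : (s+t)*r - r*(s+t) = (s*r - r*s) + (t*r - r*t) := by noncomm_ring
      rw [e]; exact InV.add (ih1 r) (ih2 r)
  | @neg t h1 ih1 =>
      intro r
      have e : (-t)*r - r*(-t) = -(t*r - r*t) := by noncomm_ring
      rw [e]; exact InV.neg (ih1 r)

end Closure
section Rot
variable (H : Hyp σ d U)
include H

/-- rotation lemma A : from a·V·b = 0 we get a·r·[v,w]·b = 0 -/
lemma rotA {a b : R} (Ha : ∀ v, InV U v → a*v*b = 0) :
    ∀ v w, InV U v → InV U w → ∀ r : R, a*r*((v*w - w*v)*b) = 0 := by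
  intro v w hv hw r
  have s1 := Ha _ (inV_mul (inV_lie H hv r) hw)
  have s2 := Ha _ (inV_lie H hv (r*w))
  have e : a*r*((v*w - w*v)*b)
      = a*(v*(r*w) - (r*w)*v)*b - a*((v*r - r*v)*w)*b := by noncomm_ring
  rw [s1, s2] at e
  simpa using e

/-- rotation lemma B : from a·V·b = 0 we get a·[v,w]·r·b = 0 -/
lemma rotB {a b : R} (Ha : ∀ v, InV U v → a*v*b = 0) :
    ∀ v w, InV U v → InV U w → ∀ r : R, a*((v*w - w*v)*r)*b = 0 := by
  intro v w hv hw r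
  have t1 := Ha _ (inV_mul hv (inV_lie H hw r))
  have t2 := Ha _ (inV_mul (inV_lie H hv r) hw)
  have t3 := Ha _ (inV_mul hw (inV_lie H hv r))
  have t4 := Ha _ (inV_lie H hw (r*v))
  have e : a*((v*w - w*v)*r)*b
      = a*(v*(w*r - r*w))*b + a*((v*r - r*v)*w)*b
        - a*(w*(v*r - r*v))*b - a*(w*(r*v) - (r*v)*w)*b := by noncomm_ring
  rw [t1, t2, t3, t4] at e
  simpa using e

/-- key lemma Q : if [V,V]·x = 0 and V is non-central then x = 0 -/
lemma lemQ {x : R} (hq : ∀ v w, InV U v → InV U w → (v*w - w*v)*x = 0)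
    (hnc : ¬ (∀ v, InV U v → ∀ r : R, v*r = r*v)) : x = 0 := by
  by_contra hx
  -- q1 : pairs annihilate x through V
  have q1 : ∀ v w z, InV U v → InV U w → InV U z → ((v*w - w*v)*z)*x = 0 := by
    intro v w z hv hw hz
    have h1 := hq v (w*z) hv (inV_mul hw hz)
    have h2 := hq v z hv hz
    have e : ((v*w - w*v)*z)*x = (v*(w*z) - (w*z)*v)*x - w*((v*z - z*v)*x) := by noncomm_ring
    rw [h1, h2] at e
    simpa using e
  -- q2 : via rotation, c * (pair * r) * x = 0
  have q2 : ∀ v w z z', InV U v → InV U w → InV U z → InV U z' → ∀ r : R,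
      (v*w - w*v)*((z*z' - z'*z)*r)*x = 0 := by
    intro v w z z' hv hw hz hz' r
    exact rotB H (fun t ht => q1 v w t hv hw ht) z z' hz hz' r
  -- q4 : products of two commutators vanish
  have q4 : ∀ v w z z', InV U v → InV U w → InV U z → InV U z' →
      (v*w - w*v)*(z*z' - z'*z) = 0 := by
    intro v w z z' hv hw hz hz'
    have hyp1 : ∀ r : R, ((v*w - w*v)*(z*z' - z'*z))*r*x = 0 := by
      intro r
      have := q2 v w z z' hv hw hz hz' r
      calc ((v*w - w*v)*(z*z' - z'*z))*r*x = (v*w - w*v)*((z*z' - z'*z)*r)*x := by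
            noncomm_ring
        _ = 0 := this
    have hyp2 : ∀ r : R, σ ((v*w - w*v)*(z*z' - z'*z))*r*x = 0 := by
      intro r
      have hσp : σ ((v*w - w*v)*(z*z' - z'*z))
          = (σ z'*σ z - σ z*σ z')*((σ w*σ v - σ v*σ w)*1) := by
        rw [H.σmul, σsub H, σsub H, H.σmul, H.σmul, H.σmul, H.σmul, mul_one]
      have := q2 (σ z') (σ z) (σ w) (σ v)
        (inV_sigma H hz') (inV_sigma H hz) (inV_sigma H hw) (inV_sigma H hv) r
      rw [hσp]
      calc ((σ z'*σ z - σ z*σ z')*((σ w*σ v - σ v*σ w)*1))*r*x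
          = (σ z'*σ z - σ z*σ z')*((σ w*σ v - σ v*σ w)*r)*x := by noncomm_ring
        _ = 0 := this
    rcases spSym H _ x hyp1 hyp2 with h | h
    · exact h
    · exact absurd h hx
  -- q6 : c * r * [pair, s] = 0
  have q6 : ∀ v w z z', InV U v → InV U w → InV U z → InV U z' → ∀ r s : R,
      (v*w - w*v)*(r*((z*z' - z'*z)*s - s*(z*z' - z'*z))) = 0 := by
    intro v w z z' hv hw hz hz' r s
    have k1 : ∀ t : R, (v*w - w*v)*(z*(z'*t - t*z') - (z'*t - t*z')*z) = 0 :=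
      fun t => q4 v w z _ hv hw hz (inV_lie H hz' t)
    have k2 : ∀ t : R, (v*w - w*v)*(z'*(z*t - t*z) - (z*t - t*z)*z') = 0 :=
      fun t => q4 v w z' _ hv hw hz' (inV_lie H hz t)
    have e : (v*w - w*v)*(r*((z*z' - z'*z)*s - s*(z*z' - z'*z)))
        = (v*w - w*v)*(z*(z'*(r*s) - (r*s)*z') - (z'*(r*s) - (r*s)*z')*z)
          - (v*w - w*v)*(z'*(z*(r*s) - (r*s)*z) - (z*(r*s) - (r*s)*z)*z')
          - ((v*w - w*v)*(z*(z'*r - r*z') - (z'*r - r*z')*z))*s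
          + ((v*w - w*v)*(z'*(z*r - r*z) - (z*r - r*z)*z'))*s := by noncomm_ring
    rw [k1 (r*s), k2 (r*s), k1 r, k2 r] at e
    simpa using e
  -- case analysis
  by_cases hall : ∀ v w, InV U v → InV U w → v*w = w*v
  · have := lemW H (InV U) (fun a ha r => inV_lie H ha r) (fun a ha => inV_sigma H ha)
      hall
    exact hnc this
  · push_neg at hall
    obtain ⟨v0, w0, hv0, hw0, hne⟩ := hall
    have hc0 : v0*w0 - w0*v0 ≠ 0 := sub_ne_zero.mpr hne
    -- all pairs are central
    have central : ∀ z z', InV U z → InV U z' → ∀ s : R,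
        (z*z' - z'*z)*s = s*(z*z' - z'*z) := by
      intro z z' hz hz' s
      have hyp1 : ∀ r : R, (v0*w0 - w0*v0)*r*((z*z' - z'*z)*s - s*(z*z' - z'*z)) = 0 := by
        intro r
        have := q6 v0 w0 z z' hv0 hw0 hz hz' r s
        calc (v0*w0 - w0*v0)*r*((z*z' - z'*z)*s - s*(z*z' - z'*z))
            = (v0*w0 - w0*v0)*(r*((z*z' - z'*z)*s - s*(z*z' - z'*z))) := by noncomm_ring
          _ = 0 := this
      have hyp2 : ∀ r : R, σ (v0*w0 - w0*v0)*r*((z*z' - z'*z)*s - s*(z*z' - z'*z)) = 0 := by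
        intro r
        have hσc : σ (v0*w0 - w0*v0) = σ w0*σ v0 - σ v0*σ w0 := by
          rw [σsub H, H.σmul, H.σmul]
        rw [hσc]
        have := q6 (σ w0) (σ v0) z z' (inV_sigma H hw0) (inV_sigma H hv0) hz hz' r s
        calc (σ w0*σ v0 - σ v0*σ w0)*r*((z*z' - z'*z)*s - s*(z*z' - z'*z))
            = (σ w0*σ v0 - σ v0*σ w0)*(r*((z*z' - z'*z)*s - s*(z*z' - z'*z))) := by
              noncomm_ring
          _ = 0 := this
      rcases spSym H _ _ hyp1 hyp2 with h | h
      · exact absurd h hc0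
      · exact sub_eq_zero.mp h
    -- now the nonzero pair c0 must be zero : contradiction
    have hyp1 : ∀ r : R, (v0*w0 - w0*v0)*r*(v0*w0 - w0*v0) = 0 := by
      intro r
      have hcen := central v0 w0 hv0 hw0 r
      have hsq0 := q4 v0 w0 v0 w0 hv0 hw0 hv0 hw0
      calc (v0*w0 - w0*v0)*r*(v0*w0 - w0*v0)
          = ((v0*w0 - w0*v0)*r)*(v0*w0 - w0*v0) := by noncomm_ring
        _ = (r*(v0*w0 - w0*v0))*(v0*w0 - w0*v0) := by rw [hcen]
        _ = r*((v0*w0 - w0*v0)*(v0*w0 - w0*v0)) := by noncomm_ring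
        _ = 0 := by rw [hsq0, mul_zero]
    have hyp2 : ∀ r : R, (v0*w0 - w0*v0)*r*σ (v0*w0 - w0*v0) = 0 := by
      intro r
      have hσc : σ (v0*w0 - w0*v0) = σ w0*σ v0 - σ v0*σ w0 := by
        rw [σsub H, H.σmul, H.σmul]
      have hcen := central v0 w0 hv0 hw0 r
      have hq4 := q4 v0 w0 (σ w0) (σ v0) hv0 hw0 (inV_sigma H hw0) (inV_sigma H hv0)
      rw [hσc]
      calc (v0*w0 - w0*v0)*r*(σ w0*σ v0 - σ v0*σ w0)
          = ((v0*w0 - w0*v0)*r)*(σ w0*σ v0 - σ v0*σ w0) := by noncomm_ring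
        _ = (r*(v0*w0 - w0*v0))*(σ w0*σ v0 - σ v0*σ w0) := by rw [hcen]
        _ = r*((v0*w0 - w0*v0)*(σ w0*σ v0 - σ v0*σ w0)) := by noncomm_ring
        _ = 0 := by rw [hq4, mul_zero]
    rcases H.sp _ _ hyp1 hyp2 with h | h
    · exact hc0 h
    · exact hc0 h

/-- key lemma P : if a·V·b = 0 and σ(a)·V·b = 0 with V non-central, then a = 0 or b = 0 -/
lemma lemP {a b : R} (Ha : ∀ v, InV U v → a*v*b = 0)
    (Hsa : ∀ v, InV U v → σ a*v*b = 0)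
    (hnc : ¬ (∀ v, InV U v → ∀ r : R, v*r = r*v)) : a = 0 ∨ b = 0 := by
  by_cases ha : a = 0
  · exact Or.inl ha
  · right
    have hq : ∀ v w, InV U v → InV U w → (v*w - w*v)*b = 0 := by
      intro v w hv hw
      have hyp1 : ∀ r : R, a*r*((v*w - w*v)*b) = 0 := rotA H Ha v w hv hw
      have hyp2 : ∀ r : R, σ a*r*((v*w - w*v)*b) = 0 := rotA H Hsa v w hv hw
      rcases spSym H _ _ hyp1 hyp2 with h | h
      · exact absurd h ha
      · exact h
    exact lemQ H hq hnc

end Rot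
section Ext
variable (H : Hyp σ d U)
include H

/-- extension of the basic two-term identity to middles in V -/
lemma midExt (A B : R) (K : R → R)
    (hK : ∀ z w : R, K (z*w + z*w) = z*K w + z*K w + K z*w + K z*w)
    (hbase : ∀ w ∈ U, d w * A + K w * B = 0) :
    ∀ t, InV U t → ∀ w ∈ U, d w * t * A + K w * t * B = 0 := by
  have words : ∀ t, IsWord U t → ∀ w ∈ U, d w * t * A + K w * t * B = 0 := by
    intro t ht
    induction ht with
    | one =>
        intro w hw
        have := hbase w hw
        calc d w * 1 * A + K w * 1 * B = d w * A + K w * B := by rw [mul_one, mul_one]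
          _ = 0 := this
    | @cons u t' hu ht' ih =>
        intro z hz
        have h1 := ih (z*u + z*u) (two_mem H z hz u hu)
        have h2 := ih u hu
        have hd2 : d (z*u + z*u) = (d z*u + z*d u) + (d z*u + z*d u) := by
          rw [H.dadd, H.dmul]
        rw [hd2, hK] at h1
        have goal2 : (d z*(u*t')*A + K z*(u*t')*B) + (d z*(u*t')*A + K z*(u*t')*B)
            = ((d z*u + z*d u) + (d z*u + z*d u))*t'*A
              + (z*K u + z*K u + K z*u + K z*u)*t'*B
              - z*(d u*t'*A + K u*t'*B) - z*(d u*t'*A + K u*t'*B) := by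
          noncomm_ring
        rw [h1, h2] at goal2
        simp only [mul_zero, sub_zero, zero_sub, neg_zero, add_zero, zero_add] at goal2
        exact H.tor _ goal2
  intro t ht
  induction ht with
  | word hw => exact words _ hw
  | @add s t' h1 h2 ih1 ih2 =>
      intro w hw
      have e : d w*(s + t')*A + K w*(s + t')*B
          = (d w*s*A + K w*s*B) + (d w*t'*A + K w*t'*B) := by noncomm_ring
      rw [e, ih1 w hw, ih2 w hw, add_zero]
  | @neg t' h1 ih1 =>
      intro w hw
      have e : d w*(-t')*A + K w*(-t')*B = -(d w*t'*A + K w*t'*B) := by noncomm_ring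
      rw [e, ih1 w hw, neg_zero]

/-- right extension : from g·d(U) = 0 to g·V·d(U) = 0 -/
lemma rightExt (g : R) (hg : ∀ γ ∈ U, g * d γ = 0) :
    ∀ t, InV U t → ∀ γ ∈ U, g * t * d γ = 0 := by
  have words : ∀ t, IsWord U t → ∀ s : R, (∀ γ ∈ U, g*s*d γ = 0) →
      ∀ γ ∈ U, g*(s*t)*d γ = 0 := by
    intro t ht
    induction ht with
    | one =>
        intro s hs γ hγ
        rw [mul_one]; exact hs γ hγ
    | @cons u t' hu ht' ih =>
        intro s hs γ hγ
        have hsu : ∀ γ' ∈ U, g*(s*u)*d γ' = 0 := by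
          intro γ' hγ'
          have h1 := hs (u*γ' + u*γ') (two_mem H u hu γ' hγ')
          have hd2 : d (u*γ' + u*γ') = (d u*γ' + u*d γ') + (d u*γ' + u*d γ') := by
            rw [H.dadd, H.dmul]
          rw [hd2] at h1
          have h2 := hs u hu
          have goal2 : (g*(s*u)*d γ' + g*(s*u)*d γ')
              = g*s*((d u*γ' + u*d γ') + (d u*γ' + u*d γ'))
                - (g*s*d u)*γ' - (g*s*d u)*γ' := by noncomm_ring
          rw [h1, h2] at goal2
          simp only [zero_mul, sub_zero, zero_sub, neg_zero, add_zero, zero_add] at goal2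
          exact H.tor _ goal2
        have := ih (s*u) hsu γ hγ
        have e : s*(u*t') = (s*u)*t' := by rw [mul_assoc]
        rw [e]
        exact this
  intro t ht
  induction ht with
  | word hw =>
      intro γ hγ
      have := words _ hw 1 (fun γ' hγ' => by rw [mul_one]; exact hg γ' hγ') γ hγ
      rwa [one_mul] at this
  | @add s t' h1 h2 ih1 ih2 =>
      intro γ hγ
      have e : g*(s + t')*d γ = g*s*d γ + g*t'*d γ := by noncomm_ring
      rw [e, ih1 γ hγ, ih2 γ hγ, add_zero]
  | @neg t' h1 ih1 =>
      intro γ hγ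
      have e : g*(-t')*d γ = -(g*t'*d γ) := by noncomm_ring
      rw [e, ih1 γ hγ, neg_zero]

/-- the squeeze : from the two-term identity we get g(u)·t·(g(v)·d(w)) = 0 -/
lemma sqz (g : R → R)
    (hId : ∀ u ∈ U, ∀ v ∈ U, ∀ t, InV U t → d u*t*g v + g u*t*d v = 0)
    (hgU : ∀ u ∈ U, g u ∈ U) :
    ∀ u ∈ U, ∀ v ∈ U, ∀ w ∈ U, ∀ t, InV U t → g u*t*(g v*d w) = 0 := by
  intro u hu v hv w hw t ht
  have Z1 := hId u hu w hw (t*g v) (inV_mul ht (inV_U (hgU v hv)))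
  have Z2 := hId u hu v hv t ht
  have Z3 := hId v hv w hw 1 inV_one
  have e : g u*t*(g v*d w) + g u*t*(g v*d w)
      = (d u*(t*g v)*g w + g u*(t*g v)*d w)
        - (d u*t*g v + g u*t*d v)*g w
        + (g u*t)*(d v*1*g w + g v*1*d w) := by noncomm_ring
  rw [Z1, Z2, Z3] at e
  simp only [zero_mul, mul_zero, sub_zero, add_zero, zero_add, zero_sub, neg_zero] at e
  exact H.tor _ e

/-- the main phase lemma -/
lemma phase (g : R → R)
    (hId : ∀ u ∈ U, ∀ v ∈ U, ∀ t, InV U t → d u*t*g v + g u*t*d v = 0)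
    (hgU : ∀ u ∈ U, g u ∈ U)
    (hgσ : ∀ u ∈ U, σ (g u) = g (σ u) ∨ σ (g u) = -(g (σ u)))
    (hnc : ¬ (∀ v, InV U v → ∀ r : R, v*r = r*v)) :
    (∀ u ∈ U, g u = 0) ∨ (∀ u ∈ U, d u = 0) := by
  by_cases hA : ∀ u ∈ U, g u = 0
  · exact Or.inl hA
  · right
    push_neg at hA
    obtain ⟨α, hα, hgα⟩ := hA
    have S := sqz H g hId hgU
    have step1 : ∀ v ∈ U, ∀ w ∈ U, g v * d w = 0 := by
      intro v hv w hw
      have hyp1 : ∀ t, InV U t → g α*t*(g v*d w) = 0 := fun t ht => S α hα v hv w hw t ht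
      have hyp2 : ∀ t, InV U t → σ (g α)*t*(g v*d w) = 0 := by
        intro t ht
        rcases hgσ α hα with hcase | hcase
        · rw [hcase]; exact S (σ α) (H.sU α hα) v hv w hw t ht
        · rw [hcase]
          have := S (σ α) (H.sU α hα) v hv w hw t ht
          calc -g (σ α)*t*(g v*d w) = -(g (σ α)*t*(g v*d w)) := by noncomm_ring
            _ = 0 := by rw [this, neg_zero]
      rcases lemP H hyp1 hyp2 hnc with h | h
      · exact absurd h hgα
      · exact h
    have step2 : ∀ v ∈ U, ∀ t, InV U t → ∀ w ∈ U, g v*t*d w = 0 := by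
      intro v hv
      exact rightExt H (g v) (fun w hw => step1 v hv w hw)
    intro w hw
    have hyp1 : ∀ t, InV U t → g α*t*d w = 0 := fun t ht => step2 α hα t ht w hw
    have hyp2 : ∀ t, InV U t → σ (g α)*t*d w = 0 := by
      intro t ht
      rcases hgσ α hα with hcase | hcase
      · rw [hcase]; exact step2 (σ α) (H.sU α hα) t ht w hw
      · rw [hcase]
        have := step2 (σ α) (H.sU α hα) t ht w hw
        calc -g (σ α)*t*d w = -(g (σ α)*t*d w) := by noncomm_ring
          _ = 0 := by rw [this, neg_zero]
    rcases lemP H hyp1 hyp2 hnc with h | h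
    · exact absurd h hgα
    · exact h

end Ext
end Stmt14

theorem stmt14 (R : Type*) [Ring R]
  (σ : R → R)
  (hσadd : ∀ x y : R, σ (x + y) = σ x + σ y)
  (hσmul : ∀ x y : R, σ (x * y) = σ y * σ x)
  (hσinv : ∀ x : R, σ (σ x) = x)
  (htor : ∀ x : R, x + x = 0 → x = 0)
  (hsp : ∀ a b : R, (∀ r : R, a * r * b = 0) → (∀ r : R, a * r * σ b = 0) → a = 0 ∨ b = 0)
  (U : AddSubgroup R)
  (hLie : ∀ u ∈ U, ∀ r : R, u * r - r * u ∈ U)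
  (hσU : ∀ u ∈ U, σ u ∈ U)
  (hsq : ∀ u ∈ U, u * u ∈ U)
  (d : R → R)
  (hdadd : ∀ x y : R, d (x + y) = d x + d y)
  (hdmul : ∀ x y : R, d (x * y) = d x * y + x * d y)
  (hdσU : ∀ u ∈ U, d (σ u) = σ (d u))
  (h : ∀ x ∈ U, ∀ y ∈ U, d x * d y - d y * d x = 0) :
    (∀ x : R, d x = 0) ∨ (∀ u ∈ U, ∀ r : R, u * r = r * u) := by
  classical
  by_cases hZ : ∀ u ∈ U, ∀ r : R, u * r = r * u
  · exact Or.inr hZ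
  left
  push_neg at hZ
  obtain ⟨u₀, hu₀, r₀, hne₀⟩ := hZ
  set US : Set R := (U : Set R) with hUS
  have memUS : ∀ {x : R}, x ∈ U → x ∈ US := fun hx => hx
  have memU : ∀ {x : R}, x ∈ US → x ∈ U := fun hx => hx
  have H : Stmt14.Hyp σ d US :=
    { σadd := hσadd, σmul := hσmul, σinv := hσinv, tor := htor, sp := hsp
      addU := fun u hu v hv => U.add_mem hu hv
      negU := fun u hu => U.neg_mem hu
      lie := fun u hu r => hLie u hu r
      sU := fun u hu => hσU u hu
      sq := fun u hu => hsq u hu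
      dadd := hdadd, dmul := hdmul
      dσU := fun u hu => hdσU u hu }
  have hnc : ¬ (∀ v, Stmt14.InV US v → ∀ r : R, v*r = r*v) := by
    intro hall
    exact hne₀ (hall u₀ (Stmt14.inV_U hu₀) r₀)
  -- Step 1 : d vanishes on U
  have hdU : ∀ u ∈ US, d u = 0 := by
    by_contra hcon
    push_neg at hcon
    obtain ⟨γ₀, hγ₀, hdγ₀⟩ := hcon
    -- the fundamental identity (1)
    have base1 : ∀ x ∈ US, ∀ u ∈ US, ∀ w ∈ US,
        d w*(d x*u - u*d x) + (d x*w - w*d x)*d u = 0 := by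
      intro x hx u hu w hw
      have hz : w*u + w*u ∈ US := Stmt14.two_mem H w hw u hu
      have h1 := h x hx _ hz
      have hdz : d (w*u + w*u) = (d w*u + w*d u) + (d w*u + w*d u) := by
        rw [hdadd, hdmul]
      rw [hdz] at h1
      have h2 := h x hx u hu
      have h3 := h x hx w hw
      have e : (d w*(d x*u - u*d x) + (d x*w - w*d x)*d u)
          + (d w*(d x*u - u*d x) + (d x*w - w*d x)*d u)
          = (d x*((d w*u + w*d u) + (d w*u + w*d u))
              - ((d w*u + w*d u) + (d w*u + w*d u))*d x)
            - (d x*d w - d w*d x)*u - (d x*d w - d w*d x)*u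
            - w*(d x*d u - d u*d x) - w*(d x*d u - d u*d x) := by noncomm_ring
      rw [h1, h2, h3] at e
      simp only [zero_mul, mul_zero, sub_zero, zero_sub, neg_zero, add_zero, zero_add] at e
      exact htor _ e
    -- the identity J : for all middles t in V
    have J : ∀ x ∈ US, ∀ u ∈ US, ∀ t, Stmt14.InV US t → ∀ w ∈ US,
        d w*t*(d x*u - u*d x) + (d x*w - w*d x)*t*d u = 0 := by
      intro x hx u hu
      exact Stmt14.midExt H (d x*u - u*d x) (d u) (fun w => d x*w - w*d x)
        (fun z w => by noncomm_ring)
        (fun w hw => base1 x hx u hu w hw)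
    -- phase 1 for σ-(anti)symmetric β
    have phase1 : ∀ β ∈ US, (σ β = β ∨ σ β = -β) →
        ∀ α ∈ US, d β*α - α*d β = 0 := by
      intro β hβ hσβ
      have hres := Stmt14.phase H (fun α => d β*α - α*d β)
        (fun u hu v hv t ht => J β hβ v hv t ht u hu)
        (fun α hα => by
          have := H.negU _ (H.lie α hα (d β))
          rwa [neg_sub] at this)
        (fun α hα => by
          have hσd : σ (d β) = d (σ β) := (hdσU β hβ).symm
          rcases hσβ with hs | hs
          · right
            rw [Stmt14.σsub H, hσmul, hσmul, hσd, hs]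
            noncomm_ring
          · left
            rw [Stmt14.σsub H, hσmul, hσmul, hσd, hs, Stmt14.dneg H]
            noncomm_ring)
        hnc
      rcases hres with hres | hres
      · exact hres
      · exact absurd (hres γ₀ hγ₀) hdγ₀
    -- combine : d(U) commutes with U
    have hc : ∀ β ∈ US, ∀ α ∈ US, d β*α - α*d β = 0 := by
      intro β hβ α hα
      have hβp : β + σ β ∈ US := H.addU β hβ _ (H.sU β hβ)
      have hβm : β - σ β ∈ US := Stmt14.subU H β hβ _ (H.sU β hβ)
      have hsp1 : σ (β + σ β) = β + σ β := by
        rw [hσadd, hσinv, add_comm]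
      have hsm1 : σ (β - σ β) = -(β - σ β) := by
        rw [Stmt14.σsub H, hσinv, neg_sub]
      have e1 := phase1 _ hβp (Or.inl hsp1) α hα
      have e2 := phase1 _ hβm (Or.inr hsm1) α hα
      have hd1 : d (β + σ β) = d β + d (σ β) := hdadd _ _
      have hd2 : d (β - σ β) = d β - d (σ β) := Stmt14.dsub H _ _
      rw [hd1] at e1
      rw [hd2] at e2
      have e : (d β*α - α*d β) + (d β*α - α*d β)
          = ((d β + d (σ β))*α - α*(d β + d (σ β)))
            + ((d β - d (σ β))*α - α*(d β - d (σ β))) := by noncomm_ring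
      rw [e1, e2, add_zero] at e
      exact htor _ e
    -- identity G1 and its extension G2
    have G1 : ∀ u ∈ US, ∀ v ∈ US, ∀ α ∈ US,
        d u*(v*α - α*v) + (u*α - α*u)*d v = 0 := by
      intro u hu v hv α hα
      have hz : u*v + u*v ∈ US := Stmt14.two_mem H u hu v hv
      have h1 := hc _ hz α hα
      have hdz : d (u*v + u*v) = (d u*v + u*d v) + (d u*v + u*d v) := by
        rw [hdadd, hdmul]
      rw [hdz] at h1
      have h2 := hc u hu α hα
      have h3 := hc v hv α hα
      have e : (d u*(v*α - α*v) + (u*α - α*u)*d v)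
          + (d u*(v*α - α*v) + (u*α - α*u)*d v)
          = (((d u*v + u*d v) + (d u*v + u*d v))*α
              - α*((d u*v + u*d v) + (d u*v + u*d v)))
            - u*(d v*α - α*d v) - u*(d v*α - α*d v)
            - (d u*α - α*d u)*v - (d u*α - α*d u)*v := by noncomm_ring
      rw [h1, h2, h3] at e
      simp only [zero_mul, mul_zero, sub_zero, zero_sub, neg_zero, add_zero, zero_add] at e
      exact htor _ e
    have G2 : ∀ v ∈ US, ∀ α ∈ US, ∀ t, Stmt14.InV US t → ∀ u ∈ US,
        d u*t*(v*α - α*v) + (u*α - α*u)*t*d v = 0 := by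
      intro v hv α hα
      exact Stmt14.midExt H (v*α - α*v) (d v) (fun u => u*α - α*u)
        (fun z w => by noncomm_ring)
        (fun u hu => G1 u hu v hv α hα)
    -- phase 2 for σ-(anti)symmetric α
    have phase2 : ∀ α ∈ US, (σ α = α ∨ σ α = -α) →
        ∀ w ∈ US, w*α - α*w = 0 := by
      intro α hα hσα
      have hres := Stmt14.phase H (fun w => w*α - α*w)
        (fun u hu v hv t ht => G2 v hv α hα t ht u hu)
        (fun w hw => H.lie w hw α)
        (fun w hw => by
          rcases hσα with hs | hs
          · right
            rw [Stmt14.σsub H, hσmul, hσmul, hs]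
            noncomm_ring
          · left
            rw [Stmt14.σsub H, hσmul, hσmul, hs]
            noncomm_ring)
        hnc
      rcases hres with hres | hres
      · exact hres
      · exact absurd (hres γ₀ hγ₀) hdγ₀
    -- combine : U is commutative
    have hUU : ∀ w ∈ US, ∀ α ∈ US, w*α = α*w := by
      intro w hw α hα
      have hαp : α + σ α ∈ US := H.addU α hα _ (H.sU α hα)
      have hαm : α - σ α ∈ US := Stmt14.subU H α hα _ (H.sU α hα)
      have hsp1 : σ (α + σ α) = α + σ α := by rw [hσadd, hσinv, add_comm]
      have hsm1 : σ (α - σ α) = -(α - σ α) := by rw [Stmt14.σsub H, hσinv, neg_sub]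
      have e1 := phase2 _ hαp (Or.inl hsp1) w hw
      have e2 := phase2 _ hαm (Or.inr hsm1) w hw
      have e : (w*α - α*w) + (w*α - α*w)
          = (w*(α + σ α) - (α + σ α)*w) + (w*(α - σ α) - (α - σ α)*w) := by noncomm_ring
      rw [e1, e2, add_zero] at e
      exact sub_eq_zero.mp (htor _ e)
    have := Stmt14.lemW H (· ∈ US) (fun a ha r => H.lie a ha r) (fun a ha => H.sU a ha)
      (fun a b ha hb => hUU a ha b hb) u₀ hu₀ r₀
    exact hne₀ this
  -- Step 2 : from d(U) = 0 conclude d = 0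
  have c1 : ∀ u ∈ US, ∀ r : R, u*d r - d r*u = 0 := by
    intro u hu r
    have h1 : d (u*r - r*u) = 0 := hdU _ (H.lie u hu r)
    have h2 : d (u*r - r*u) = (d u*r + u*d r) - (d r*u + r*d u) := by
      rw [Stmt14.dsub H, hdmul, hdmul]
    rw [hdU u hu, h1] at h2
    simp only [zero_mul, mul_zero, zero_add, add_zero] at h2
    exact h2.symm
  have c2 : ∀ (s : R), ∀ u ∈ US, ∀ u' ∈ US, d s*(u'*u - u*u') = 0 := by
    intro s u hu u' hu'
    have h1 := c1 u' hu' (s*u)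
    have h2 : d (s*u) = d s*u := by rw [hdmul, hdU u hu, mul_zero, add_zero]
    rw [h2] at h1
    have h3 := c1 u' hu' s
    have e : d s*(u'*u - u*u') = (u'*(d s*u) - (d s*u)*u') - (u'*d s - d s*u')*u := by
      noncomm_ring
    rw [h1, h3] at e
    simpa using e
  have c3 : ∀ (s t : R), ∀ u ∈ US, ∀ u' ∈ US, d s*t*(u'*u - u*u') = 0 := by
    intro s t u hu u' hu'
    have h1 := c2 (s*t) u hu u' hu'
    rw [hdmul] at h1
    have h2 := c2 t u hu u' hu'
    have e : d s*t*(u'*u - u*u')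
        = (d s*t + s*d t)*(u'*u - u*u') - s*(d t*(u'*u - u*u')) := by noncomm_ring
    rw [h1, h2] at e
    simpa using e
  -- U is not commutative (else it would be central)
  have hncU : ∃ u₁ ∈ US, ∃ u₂ ∈ US, u₁*u₂ ≠ u₂*u₁ := by
    by_contra hcc
    push_neg at hcc
    have := Stmt14.lemW H (· ∈ US) (fun a ha r => H.lie a ha r) (fun a ha => H.sU a ha)
      (fun a b ha hb => hcc a ha b hb) u₀ hu₀ r₀
    exact hne₀ this
  obtain ⟨u₁, hu₁, u₂, hu₂, hc12⟩ := hncU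
  intro x
  have hyp1 : ∀ r : R, d x*r*(u₂*u₁ - u₁*u₂) = 0 := fun r => c3 x r u₁ hu₁ u₂ hu₂
  have hyp2 : ∀ r : R, d x*r*σ (u₂*u₁ - u₁*u₂) = 0 := by
    intro r
    have hσc : σ (u₂*u₁ - u₁*u₂) = σ u₁*σ u₂ - σ u₂*σ u₁ := by
      rw [Stmt14.σsub H, hσmul, hσmul]
    rw [hσc]
    exact c3 x r (σ u₂) (H.sU u₂ hu₂) (σ u₁) (H.sU u₁ hu₁)
  rcases hsp _ _ hyp1 hyp2 with hh | hh
  · exact hh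
  · exact absurd (sub_eq_zero.mp hh).symm hc12
end

section
/- Let R be a 2-torsion free σ-prime ring and d a nonzero derivation of R. If d([x,y]) = 0 for all x, y ∈ R, then R is commutative. -/
/-!
Linearizing `d [x, y] = 0` gives `d x * r * [w, z] = - d w * r * [x, z]`, while `[x, z] * r * d x = 0`;
together they make `c := d x * r * [w, z]` satisfy `c R c = 0`. A σ-prime ring is semiprime, so
`d x * R * [w, z] = 0`. As `σ [w, z] = [σ z, σ w]`, also `d x * R * σ [w, z] = 0`, and σ-primeness
with `d x ≠ 0` forces `[w, z] = 0`.
-/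

section

variable {R : Type*} [Ring R]

def IsSigmaPrime (σ : R → R) : Prop :=
  ∀ a b : R, (∀ r, a * r * b = 0) → (∀ r, a * r * σ b = 0) → a = 0 ∨ b = 0

variable (R) in
def IsSemiprime : Prop :=
  ∀ a : R, (∀ r, a * r * a = 0) → a = 0

section Involution

variable {σ : R → R}

theorem map_zero_of_antimul_involutive (hσmul : ∀ x y, σ (x * y) = σ y * σ x)
    (hσinv : ∀ x, σ (σ x) = x) : σ 0 = 0 := by
  calc σ 0 = σ (σ 0 * 0) := by rw [mul_zero]
    _ = 0 := by rw [hσmul, hσinv, mul_zero]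

theorem IsSigmaPrime.isSemiprime (hσmul : ∀ x y, σ (x * y) = σ y * σ x)
    (hσinv : ∀ x, σ (σ x) = x) (hsp : IsSigmaPrime σ) : IsSemiprime R := by
  intro a ha
  have hσa : ∀ t, a * t * σ a = 0 := by
    intro t
    have hleft : ∀ r, a * r * (a * t * σ a) = 0 := fun r => by
      rw [show a * r * (a * t * σ a) = a * r * a * t * σ a by noncomm_ring, ha, zero_mul, zero_mul]
    have hright : ∀ r, a * r * σ (a * t * σ a) = 0 := fun r => by
      rw [hσmul, hσmul, hσinv,
        show a * r * (a * (σ t * σ a)) = a * r * a * σ t * σ a by noncomm_ring, ha, zero_mul, zero_mul]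
    exact (hsp a _ hleft hright).elim (fun h0 => by rw [h0, zero_mul, zero_mul]) id
  rcases hsp a (σ a) hσa (fun r => by rw [hσinv]; exact ha r) with h0 | h0
  · exact h0
  · rw [← hσinv a, h0, map_zero_of_antimul_involutive hσmul hσinv]

end Involution

section Derivation

variable {d : R → R}

theorem deriv_mul_commutator_eq_zero (hdmul : ∀ x y, d (x * y) = d x * y + x * d y)
    (h : ∀ x y, d (x * y - y * x) = 0) (x y : R) : d x * (x * y - y * x) = 0 := by
  have := h x (x * y)
  rwa [show x * (x * y) - x * y * x = x * (x * y - y * x) by noncomm_ring, hdmul, h x y, mul_zero,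
    add_zero] at this

theorem commutator_mul_deriv_eq_zero (hdmul : ∀ x y, d (x * y) = d x * y + x * d y)
    (h : ∀ x y, d (x * y - y * x) = 0) (x y : R) : (x * y - y * x) * d x = 0 := by
  have := h x (y * x)
  rwa [show x * (y * x) - y * x * x = (x * y - y * x) * x by noncomm_ring, hdmul, h x y, zero_mul,
    zero_add] at this

theorem deriv_mul_mul_commutator_self_eq_zero (hdmul : ∀ x y, d (x * y) = d x * y + x * d y)
    (h : ∀ x y, d (x * y - y * x) = 0) (x r z : R) : d x * r * (x * z - z * x) = 0 := by
  rw [show d x * r * (x * z - z * x)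
      = d x * (x * (r * z) - r * z * x) - d x * (x * r - r * x) * z by noncomm_ring,
    deriv_mul_commutator_eq_zero hdmul h, deriv_mul_commutator_eq_zero hdmul h, zero_mul, sub_zero]

theorem commutator_mul_mul_deriv_eq_zero (hdmul : ∀ x y, d (x * y) = d x * y + x * d y)
    (h : ∀ x y, d (x * y - y * x) = 0) (x r z : R) : (x * z - z * x) * r * d x = 0 := by
  rw [show (x * z - z * x) * r * d x
      = (x * (z * r) - z * r * x) * d x - z * ((x * r - r * x) * d x) by noncomm_ring,
    commutator_mul_deriv_eq_zero hdmul h, commutator_mul_deriv_eq_zero hdmul h, mul_zero, sub_zero]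

theorem deriv_mul_mul_commutator_eq_neg (hdadd : ∀ x y, d (x + y) = d x + d y)
    (hdmul : ∀ x y, d (x * y) = d x * y + x * d y) (h : ∀ x y, d (x * y - y * x) = 0)
    (x w z r : R) : d x * r * (w * z - z * w) = -(d w * r * (x * z - z * x)) := by
  refine eq_neg_of_add_eq_zero_left ?_
  rw [show d x * r * (w * z - z * w) + d w * r * (x * z - z * x)
      = (d x + d w) * r * ((x + w) * z - z * (x + w))
        - d x * r * (x * z - z * x) - d w * r * (w * z - z * w) by noncomm_ring,
    ← hdadd]
  simp only [deriv_mul_mul_commutator_self_eq_zero hdmul h, sub_zero]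

theorem deriv_mul_mul_commutator_eq_zero (hdadd : ∀ x y, d (x + y) = d x + d y)
    (hdmul : ∀ x y, d (x * y) = d x * y + x * d y) (h : ∀ x y, d (x * y - y * x) = 0)
    (hR : IsSemiprime R) (x w z r : R) : d x * r * (w * z - z * w) = 0 := by
  refine hR _ fun t => ?_
  nth_rewrite 2 [deriv_mul_mul_commutator_eq_neg hdadd hdmul h]
  rw [show d x * r * (w * z - z * w) * t * -(d w * r * (x * z - z * x))
      = -(d x * (r * ((w * z - z * w) * t * d w)) * (r * (x * z - z * x))) by noncomm_ring,
    commutator_mul_mul_deriv_eq_zero hdmul h, mul_zero, mul_zero, zero_mul, neg_zero]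

end Derivation

end

theorem stmt15_general (R : Type*) [Ring R]
  (σ : R → R)
  (hσadd : ∀ x y : R, σ (x + y) = σ x + σ y)
  (hσmul : ∀ x y : R, σ (x * y) = σ y * σ x)
  (hσinv : ∀ x : R, σ (σ x) = x)
  (hsp : ∀ a b : R, (∀ r : R, a * r * b = 0) → (∀ r : R, a * r * σ b = 0) → a = 0 ∨ b = 0)
  (d : R → R)
  (hdadd : ∀ x y : R, d (x + y) = d x + d y)
  (hdmul : ∀ x y : R, d (x * y) = d x * y + x * d y)
  (hdnz : ∃ x : R, d x ≠ 0)
  (h : ∀ x y : R, d (x * y - y * x) = 0) :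
    ∀ x y : R, x * y = y * x := by
  obtain ⟨x₀, hx₀⟩ := hdnz
  have hvanish := deriv_mul_mul_commutator_eq_zero hdadd hdmul h
    ((show IsSigmaPrime σ from hsp).isSemiprime hσmul hσinv) x₀
  intro w z
  have hσcomm : σ (w * z - z * w) = σ z * σ w - σ w * σ z := by
    simpa only [AddMonoidHom.mk'_apply, hσmul] using map_sub (AddMonoidHom.mk' σ hσadd) (w * z) (z * w)
  rcases hsp _ _ (hvanish w z) (fun r => hσcomm ▸ hvanish _ _ r) with h0 | h0
  · exact absurd h0 hx₀
  · exact sub_eq_zero.mp h0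

theorem stmt15 (R : Type*) [Ring R]
  (σ : R → R)
  (hσadd : ∀ x y : R, σ (x + y) = σ x + σ y)
  (hσmul : ∀ x y : R, σ (x * y) = σ y * σ x)
  (hσinv : ∀ x : R, σ (σ x) = x)
  (htor : ∀ x : R, x + x = 0 → x = 0)
  (hsp : ∀ a b : R, (∀ r : R, a * r * b = 0) → (∀ r : R, a * r * σ b = 0) → a = 0 ∨ b = 0)
  (d : R → R)
  (hdadd : ∀ x y : R, d (x + y) = d x + d y)
  (hdmul : ∀ x y : R, d (x * y) = d x * y + x * d y)
  (hdnz : ∃ x : R, d x ≠ 0)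
  (h : ∀ x y : R, d (x * y - y * x) = 0) :
    ∀ x y : R, x * y = y * x :=
  stmt15_general R σ hσadd hσmul hσinv hsp d hdadd hdmul hdnz h
end
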